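/- Let n ≥ 3, let k be a field with char k = 0 or char k > n, and for each permutation σ in the symmetric group S_n let c_σ ∈ k with c_σ ≠ 0. Consider the determinant-like polynomial D = Σ_{σ ∈ S_n} c_σ · x_{1,σ(1)} x_{2,σ(2)} ⋯ x_{n,σ(n)}, a form of degree n in the n² variables x_{ij}. Then D is central: Z(D) = k·I_{n²}, i.e., every matrix X ∈ k^{n²×n²} (rows and columns indexed by the pairs (i,j)) satisfying (H·X)ᵀ = H·X, where H is the Hessian matrix of D, is a scalar multiple of the identity. -/

import Mathlib

open MvPolynomial Matrix

/-- The Hessian matrix of a multivariate polynomial. -/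
noncomputable def hessian {k : Type*} [Field k] {σ : Type*} (f : MvPolynomial σ k) :
    Matrix σ σ (MvPolynomial σ k) :=
  Matrix.of fun i j => pderiv i (pderiv j f)

/-- The center of a form `f`: scalar matrices `X` such that `H · X` is symmetric,
where `H` is the Hessian matrix of `f`. -/
def center {k : Type*} [Field k] {σ : Type*} [Fintype σ] (f : MvPolynomial σ k) :
    Set (Matrix σ σ k) :=
  {X | (hessian f * X.map (C : k → MvPolynomial σ k))ᵀ
        = hessian f * X.map (C : k → MvPolynomial σ k)}

/-!
If `Y` lies in the center of `f`, then evaluating the polynomial identity `(H Y)ᵀ = H Y` at a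
point `v` shows that the scalar matrix `H(v) Y` is symmetric. For `D = ∑ c_τ ∏ᵢ x_{i,τ i}` take
for `v` the permutation matrix of `τ₀` with the rows `p ≠ q` deleted. A term `c_τ ∂ₐ∂ₑ ∏ᵢ x_{i,τ i}`
survives at `v` only when `τ` agrees with `τ₀` off the rows `p, q` of the cells `a, e`; hence only
the rows of `H(v)` indexed by the cells `(i, τ₀ j)`, `i, j ∈ {p, q}`, are nonzero, and the row of
`(p, τ₀ p)` is `c_{τ₀}` times the unit vector at `(q, τ₀ q)`. Comparing the entries of `H(v) Y` at
`((p, τ₀ p), b)` and `(b, (p, τ₀ p))` for suitable `τ₀, p, q, b`, with `n ≥ 3` leaving room for a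
spare row or column, shows that `Y` is diagonal with constant diagonal.
-/

namespace MvPolynomial

variable {R σ : Type*} [CommRing R]

theorem pderiv_pderiv_comm (i j : σ) (f : MvPolynomial σ R) :
    pderiv i (pderiv j f) = pderiv j (pderiv i f) := by
  classical
  have h : ⁅pderiv i, pderiv j⁆ = (0 : Derivation R (MvPolynomial σ R) (MvPolynomial σ R)) :=
    derivation_ext fun l => by
      rw [Derivation.commutator_apply, pderiv_X, pderiv_X]
      simp only [Pi.single_apply]
      split_ifs <;> simp
  have := congr($h f)
  rwa [Derivation.commutator_apply, Derivation.zero_apply, sub_eq_zero] at this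

theorem pderiv_prod_X_eq_zero {ι : Type*} {s : Finset ι} {g : ι → σ} {x : σ}
    (h : ∀ l ∈ s, g l ≠ x) : pderiv x (∏ l ∈ s, X (g l) : MvPolynomial σ R) = 0 := by
  classical
  induction s using Finset.induction_on with
  | empty => simp
  | insert a s ha ih =>
    rw [Finset.prod_insert ha, pderiv_mul, pderiv_X_of_ne (h a (by simp)),
      ih fun l hl => h l (by simp [hl])]
    simp

theorem pderiv_prod_X_graph {ι κ : Type*} [DecidableEq ι] [DecidableEq κ] (s : Finset ι)
    (f : ι → κ) (i : ι) (j : κ) :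
    pderiv (i, j) (∏ l ∈ s, X (l, f l) : MvPolynomial (ι × κ) R) =
      if i ∈ s ∧ f i = j then ∏ l ∈ s.erase i, X (l, f l) else 0 := by
  by_cases hi : i ∈ s
  · have hrest : pderiv (i, j) (∏ l ∈ s.erase i, X (l, f l) : MvPolynomial (ι × κ) R) = 0 :=
      pderiv_prod_X_eq_zero fun l hl h => Finset.ne_of_mem_erase hl (congrArg Prod.fst h)
    rw [← Finset.mul_prod_erase s _ hi, pderiv_mul, hrest, pderiv_X]
    by_cases hj : f i = j <;> simp [hi, hj, Prod.ext_iff]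
  · rw [if_neg (by tauto)]
    exact pderiv_prod_X_eq_zero fun l hl h => hi ((Prod.mk.inj h).1 ▸ hl)

end MvPolynomial

theorem Equiv.Perm.apply_eq_or_apply_eq_of_eq_off {α : Type*} {τ₀ τ : Perm α} {p q : α}
    (h : ∀ l, l ≠ p → l ≠ q → τ₀ l = τ l) : τ p = τ₀ p ∨ τ p = τ₀ q := by
  set l := τ₀.symm (τ p)
  have hl : τ₀ l = τ p := τ₀.apply_symm_apply _
  by_cases hlp : l = p
  · exact .inl (hlp ▸ hl).symm
  by_cases hlq : l = q
  · exact .inr (hlq ▸ hl).symm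
  exact absurd (τ.injective ((h l hlp hlq).symm.trans hl)) hlp

theorem Equiv.Perm.exists_apply_eq_apply_eq {α : Type*} [DecidableEq α] {a b a' b' : α}
    (hab : a ≠ b) (hab' : a' ≠ b') : ∃ τ : Perm α, τ a = a' ∧ τ b = b' := by
  set w := swap a a' b
  have hw : a' ≠ w := fun h => hab ((swap a a').injective ((swap_apply_left a a').trans h))
  exact ⟨swap w b' * swap a a', by simp [swap_apply_of_ne_of_ne hw hab'], by simp [w]⟩

theorem Fintype.exists_ne_ne_of_two_lt_card {α : Type*} [Fintype α] (h : 2 < Fintype.card α)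
    (x y : α) : ∃ z, z ≠ x ∧ z ≠ y :=
  ENat.exists_ne_ne_of_three_le (by rw [ENat.card_eq_coe_fintype_card]; exact_mod_cast h) x y

open Finset Equiv

section center

variable {k σ : Type*} [Field k]

theorem hessian_transpose (f : MvPolynomial σ k) : (hessian f)ᵀ = hessian f := by
  ext i j : 1
  exact pderiv_pderiv_comm j i f

variable [Fintype σ]

theorem smul_one_mem_center [DecidableEq σ] (f : MvPolynomial σ k) (lam : k) :
    lam • (1 : Matrix σ σ k) ∈ center f := by
  have hmap : (lam • (1 : Matrix σ σ k)).map (C : k → MvPolynomial σ k) =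
      (C lam : MvPolynomial σ k) • 1 := by
    ext i j
    by_cases h : i = j <;> simp [h]
  show (hessian f * _)ᵀ = _
  rw [hmap, Matrix.mul_smul, Matrix.mul_one, Matrix.transpose_smul, hessian_transpose]

theorem transpose_eval_hessian_mul_of_mem_center {f : MvPolynomial σ k} {Y : Matrix σ σ k}
    (hY : Y ∈ center f) (v : σ → k) :
    ((hessian f).map (eval v) * Y)ᵀ = (hessian f).map (eval v) * Y := by
  have hmap : (hessian f * Y.map C).map (eval v) = (hessian f).map (eval v) * Y := by
    rw [Matrix.map_mul, Matrix.map_map]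
    congr 1
    ext i j
    simp
  rw [← hmap, ← Matrix.transpose_map, hY]

end center

section permPoint

variable {k ι : Type*} [Zero k] [One k] [DecidableEq ι]

def permPoint (τ₀ : Perm ι) (p q : ι) (x : ι × ι) : k :=
  if x.1 ≠ p ∧ x.1 ≠ q ∧ τ₀ x.1 = x.2 then 1 else 0

theorem permPoint_comm (τ₀ : Perm ι) (p q : ι) :
    (permPoint τ₀ p q : ι × ι → k) = permPoint τ₀ q p := by
  ext x
  simp only [permPoint, and_left_comm]

end permPoint

def IsCompletion {ι : Type*} (τ₀ : Perm ι) (p q : ι) (τ : Perm ι) (a e : ι × ι) : Prop :=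
  τ a.1 = a.2 ∧ τ e.1 = e.2 ∧ a.1 ≠ e.1 ∧ ∀ l, l ≠ a.1 → l ≠ e.1 → l ≠ p ∧ l ≠ q ∧ τ₀ l = τ l

section IsCompletion

variable {ι : Type*} {τ₀ τ : Perm ι} {p q : ι} {a e : ι × ι}

theorem IsCompletion.fst_eq (h : IsCompletion τ₀ p q τ a e) (hpq : p ≠ q) :
    (a.1 = p ∧ e.1 = q) ∨ (a.1 = q ∧ e.1 = p) := by
  obtain ⟨-, -, -, hrest⟩ := h
  have hp : p = a.1 ∨ p = e.1 := by
    by_contra! hp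
    exact (hrest p hp.1 hp.2).1 rfl
  have hq : q = a.1 ∨ q = e.1 := by
    by_contra! hq
    exact (hrest q hq.1 hq.2).2.1 rfl
  grind

theorem IsCompletion.mem_block (h : IsCompletion τ₀ p q τ a e) (hpq : p ≠ q) :
    (a.1 = p ∨ a.1 = q) ∧ (a.2 = τ₀ p ∨ a.2 = τ₀ q) := by
  have hagree : ∀ l, l ≠ p → l ≠ q → τ₀ l = τ l := by
    intro l hlp hlq
    rcases h.fst_eq hpq with ⟨ha, he⟩ | ⟨ha, he⟩ <;>
      exact (h.2.2.2 l (by rwa [ha]) (by rwa [he])).2.2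
  rw [← h.1]
  rcases h.fst_eq hpq with ⟨ha, -⟩ | ⟨ha, -⟩ <;> rw [ha]
  · exact ⟨.inl rfl, Perm.apply_eq_or_apply_eq_of_eq_off hagree⟩
  · exact ⟨.inr rfl, (Perm.apply_eq_or_apply_eq_of_eq_off fun l hq hp => hagree l hp hq).symm⟩

theorem isCompletion_left_iff (hpq : p ≠ q) :
    IsCompletion τ₀ p q τ (p, τ₀ p) e ↔ τ = τ₀ ∧ e = (q, τ₀ q) := by
  refine ⟨fun h => ?_, ?_⟩
  · have he : e.1 = q := by
      rcases h.fst_eq hpq with ⟨-, he⟩ | ⟨hp, -⟩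
      exacts [he, absurd hp hpq]
    have hagree : ∀ l, l ≠ q → l ≠ p → τ₀ l = τ l := fun l hq hp =>
      (h.2.2.2 l hp (he ▸ hq)).2.2
    have hτq : τ q = τ₀ q := by
      refine (Perm.apply_eq_or_apply_eq_of_eq_off hagree).resolve_right fun hq => hpq ?_
      exact τ.injective (hq.trans h.1.symm) |>.symm
    have hτ : τ = τ₀ := by
      ext l
      by_cases hlp : l = p
      · exact hlp ▸ h.1
      by_cases hlq : l = q
      · exact hlq ▸ hτq
      exact (hagree l hlq hlp).symm
    subst hτ
    exact ⟨rfl, Prod.ext he (he ▸ h.2.1.symm)⟩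
  · rintro ⟨rfl, rfl⟩
    exact ⟨rfl, rfl, hpq, fun l hp hq => ⟨hp, hq, rfl⟩⟩

end IsCompletion

section detLike

variable {k ι : Type*} [Field k] [Fintype ι] [DecidableEq ι]

noncomputable def detLike (c : Perm ι → k) : MvPolynomial (ι × ι) k :=
  ∑ τ : Perm ι, C (c τ) * ∏ i, X (i, τ i)

theorem hessian_detLike_apply (c : Perm ι → k) (a e : ι × ι) :
    hessian (detLike c) a e = ∑ τ : Perm ι,
      if τ e.1 = e.2 ∧ a.1 ≠ e.1 ∧ τ a.1 = a.2 then
        C (c τ) * ∏ l ∈ (univ.erase e.1).erase a.1, X (l, τ l) else 0 := by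
  obtain ⟨a₁, a₂⟩ := a
  obtain ⟨e₁, e₂⟩ := e
  simp only [hessian, detLike, of_apply, map_sum, pderiv_C_mul]
  refine sum_congr rfl fun τ _ => ?_
  by_cases he : τ e₁ = e₂ <;> by_cases ha : a₁ ≠ e₁ ∧ τ a₁ = a₂ <;>
    simp_all [pderiv_prod_X_graph]

open Classical in
theorem eval_permPoint_hessian_detLike (c : Perm ι → k) (τ₀ : Perm ι) (p q : ι) (a e : ι × ι) :
    eval (permPoint τ₀ p q) (hessian (detLike c) a e) =
      ∑ τ : Perm ι, if IsCompletion τ₀ p q τ a e then c τ else 0 := by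
  rw [hessian_detLike_apply, map_sum]
  refine sum_congr rfl fun τ _ => ?_
  simp only [IsCompletion, apply_ite (eval _), map_mul, eval_C, map_prod, eval_X, permPoint,
    prod_ite_zero, prod_const_one, mem_erase, mem_univ, map_zero]
  split_ifs <;> grind

variable {c : Perm ι → k} {τ₀ : Perm ι} {p q : ι}

theorem eval_permPoint_hessian_detLike_eq_zero (hpq : p ≠ q) {a : ι × ι}
    (ha : (a.1 ≠ p ∧ a.1 ≠ q) ∨ (a.2 ≠ τ₀ p ∧ a.2 ≠ τ₀ q)) (e : ι × ι) :
    eval (permPoint τ₀ p q) (hessian (detLike c) a e) = 0 := by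
  rw [eval_permPoint_hessian_detLike]
  refine sum_eq_zero fun τ _ => if_neg fun h => ?_
  have := h.mem_block hpq
  tauto

theorem eval_permPoint_hessian_detLike_left (hpq : p ≠ q) (e : ι × ι) :
    eval (permPoint τ₀ p q) (hessian (detLike c) (p, τ₀ p) e) =
      if e = (q, τ₀ q) then c τ₀ else 0 := by
  rw [eval_permPoint_hessian_detLike]
  simp [isCompletion_left_iff hpq, ite_and]

variable {Y : Matrix (ι × ι) (ι × ι) k}

theorem apply_eq_zero_of_mem_center_detLike (hY : Y ∈ center (detLike c)) (hc : c τ₀ ≠ 0)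
    (hpq : p ≠ q) {j : ι × ι} (hj : (j.1 ≠ p ∧ j.1 ≠ q) ∨ (j.2 ≠ τ₀ p ∧ j.2 ≠ τ₀ q)) :
    Y (q, τ₀ q) j = 0 := by
  have hsymm := congrFun₂ (transpose_eval_hessian_mul_of_mem_center hY (permPoint τ₀ p q))
    (p, τ₀ p) j
  simp only [transpose_apply, mul_apply, map_apply, eval_permPoint_hessian_detLike_eq_zero hpq hj,
    eval_permPoint_hessian_detLike_left hpq, zero_mul, sum_const_zero, ite_mul, sum_ite_eq',
    mem_univ, if_true, zero_eq_mul] at hsymm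
  exact hsymm.resolve_left hc

theorem apply_self_eq_of_mem_center_detLike (hY : Y ∈ center (detLike c)) (hc : c τ₀ ≠ 0)
    (hpq : p ≠ q) : Y (p, τ₀ p) (p, τ₀ p) = Y (q, τ₀ q) (q, τ₀ q) := by
  have hsymm := congrFun₂ (transpose_eval_hessian_mul_of_mem_center hY (permPoint τ₀ p q))
    (p, τ₀ p) (q, τ₀ q)
  simp only [transpose_apply, mul_apply, map_apply, eval_permPoint_hessian_detLike_left hpq,
    ite_mul, zero_mul, sum_ite_eq', mem_univ, if_true] at hsymm
  simp only [permPoint_comm τ₀ p q, eval_permPoint_hessian_detLike_left hpq.symm,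
    ite_mul, zero_mul, sum_ite_eq', mem_univ, if_true] at hsymm
  exact mul_left_cancel₀ hc hsymm

theorem apply_eq_zero_of_ne_of_mem_center_detLike (h3 : 2 < Fintype.card ι)
    (hc : ∀ τ, c τ ≠ 0) (hY : Y ∈ center (detLike c)) {i j : ι × ι} (hij : i ≠ j) :
    Y i j = 0 := by
  obtain ⟨i₁, i₂⟩ := i
  obtain ⟨p, hp, hpj⟩ := Fintype.exists_ne_ne_of_two_lt_card h3 i₁ j.1
  by_cases hrow : i₁ = j.1
  · obtain ⟨r, hri, hrj⟩ := Fintype.exists_ne_ne_of_two_lt_card h3 i₂ j.2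
    obtain ⟨τ₀, hτp, hτi⟩ := Perm.exists_apply_eq_apply_eq hp hri
    have hcol : j.2 ≠ i₂ := fun h => hij (Prod.ext hrow h.symm)
    simpa [hτi] using apply_eq_zero_of_mem_center_detLike (q := i₁) hY (hc τ₀) hp
      (.inr ⟨hτp ▸ hrj.symm, hτi ▸ hcol⟩)
  · simpa using apply_eq_zero_of_mem_center_detLike (τ₀ := swap i₁ i₂) (q := i₁) hY (hc _) hp
      (.inl ⟨Ne.symm hpj, Ne.symm hrow⟩)

theorem apply_self_eq_apply_self_of_mem_center_detLike (h3 : 2 < Fintype.card ι)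
    (hc : ∀ τ, c τ ≠ 0) (hY : Y ∈ center (detLike c)) (i j : ι × ι) :
    Y i i = Y j j := by
  have key : ∀ i r : ι × ι, i.1 ≠ r.1 → i.2 ≠ r.2 → Y i i = Y r r := by
    rintro ⟨i₁, i₂⟩ ⟨r₁, r₂⟩ h₁ h₂
    obtain ⟨τ₀, hi, hr⟩ := Perm.exists_apply_eq_apply_eq h₁ h₂
    simpa [hi, hr] using apply_self_eq_of_mem_center_detLike hY (hc τ₀) h₁
  obtain ⟨r₁, hr₁i, hr₁j⟩ := Fintype.exists_ne_ne_of_two_lt_card h3 i.1 j.1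
  obtain ⟨r₂, hr₂i, hr₂j⟩ := Fintype.exists_ne_ne_of_two_lt_card h3 i.2 j.2
  exact (key i (r₁, r₂) hr₁i.symm hr₂i.symm).trans (key j (r₁, r₂) hr₁j.symm hr₂j.symm).symm

theorem center_detLike (h3 : 2 < Fintype.card ι) (hc : ∀ τ, c τ ≠ 0) :
    center (detLike c) = Set.range fun lam : k => lam • (1 : Matrix (ι × ι) (ι × ι) k) := by
  ext Y
  refine ⟨fun hY => ?_, fun ⟨lam, hlam⟩ => hlam ▸ smul_one_mem_center _ lam⟩
  obtain ⟨z⟩ : Nonempty ι := Fintype.card_pos_iff.mp (by omega)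
  refine ⟨Y (z, z) (z, z), ?_⟩
  ext i j
  by_cases hij : i = j
  · simp [hij, apply_self_eq_apply_self_of_mem_center_detLike h3 hc hY j (z, z)]
  · simp [hij, apply_eq_zero_of_ne_of_mem_center_detLike h3 hc hY hij]

end detLike

theorem determinant_like_is_central_general {k : Type*} [Field k] {n : ℕ} (hn : 3 ≤ n)
    (c : Equiv.Perm (Fin n) → k) (hc : ∀ τ, c τ ≠ 0)
    (D : MvPolynomial (Fin n × Fin n) k)
    (hD : D = ∑ τ : Equiv.Perm (Fin n), C (c τ) * ∏ i : Fin n, X (i, τ i)) :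
    center D = Set.range
      (fun lam : k => lam • (1 : Matrix (Fin n × Fin n) (Fin n × Fin n) k)) := by
  subst hD
  exact center_detLike (by rw [Fintype.card_fin]; omega) hc

/-- a determinant-like polynomial
`D = Σ_σ c_σ x_{1,σ(1)} ⋯ x_{n,σ(n)}` with all `c_σ ≠ 0` and `n ≥ 3` is central. -/
theorem determinant_like_is_central {k : Type*} [Field k] {n : ℕ} (hn : 3 ≤ n)
    (hchar : ringChar k = 0 ∨ n < ringChar k)
    (c : Equiv.Perm (Fin n) → k) (hc : ∀ τ, c τ ≠ 0)
    (D : MvPolynomial (Fin n × Fin n) k)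
    (hD : D = ∑ τ : Equiv.Perm (Fin n), C (c τ) * ∏ i : Fin n, X (i, τ i)) :
    center D = Set.range
      (fun lam : k => lam • (1 : Matrix (Fin n × Fin n) (Fin n × Fin n) k)) :=
  determinant_like_is_central_general hn c hc D hD
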